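/- Assume Assumptions A1, A2 and A3 hold, and let P be a real symmetric positive semidefinite solution of the ARE with Ã = Ā − B̄B̄ᵀP. Then the kernel of Ã is the one-dimensional subspace spanned by ψ₁ = [x*; u*], and 0 is an algebraically simple eigenvalue of Ã: there is no vector ĥ ∈ ℂ^{n+m} with Ãĥ = h for a nonzero h satisfying Ãh = 0 (equivalently, the generalized eigenspace of Ã for the eigenvalue 0 is one-dimensional). -/

import Mathlib

open Matrix

/-- `Q(α) = D + A¹(α) − A²(α)` where `A¹(α)` keeps adjacency entries with `α i = -α j`
and `A²(α)` keeps adjacency entries with `α i = α j`. -/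
noncomputable def Qmat {n : ℕ} (G : SimpleGraph (Fin n)) [DecidableRel G.Adj] (α : Fin n → ℝ) :
    Matrix (Fin n) (Fin n) ℝ :=
  G.degMatrix ℝ
    + Matrix.of (fun i j => if α i = -α j then G.adjMatrix ℝ i j else 0)
    - Matrix.of (fun i j => if α i = α j then G.adjMatrix ℝ i j else 0)

/-- A pair `(M, N)` with `M : k×k`, `N : k×l` is controllable if the controllability
matrix `[N, MN, …, M^{k−1}N]` has full rank `k`. -/
def Controllable {K L : Type*} [Fintype K] [Fintype L] [DecidableEq K]
    (M : Matrix K K ℝ) (N : Matrix K L ℝ) : Prop :=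
  (Matrix.of fun (i : K) (p : Fin (Fintype.card K) × L) => (M ^ (p.1 : ℕ) * N) i p.2).rank
    = Fintype.card K

/-- `(M, C)` is observable iff `(Mᵀ, Cᵀ)` is controllable. -/
def Observable {K L : Type*} [Fintype K] [Fintype L] [DecidableEq K] [DecidableEq L]
    (M : Matrix K K ℝ) (C : Matrix L K ℝ) : Prop :=
  Controllable Mᵀ Cᵀ

/-!
Around the closed loop `Ã = Ā − B̄B̄ᵀP` the Riccati equation reads
`ÃᵀP + PÃ + PB̄B̄ᵀP + Q̄ = 0`, so `2⟪Ãv, Pv⟫ + ‖B̄ᵀPv‖² + vᵀQ̄v = 0` for every `v`.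
As `Q̄ ⪰ 0`, this gives `ker Ã = ker Ā ∩ ker Q̄`. Since `Q(α) = D_α L D_α` with `G` connected,
`ker Q(α)` is the line through `α`, hence through `x* ≠ 0`; with `B` injective,
`ker Ā ∩ ker Q̄` is the line through `[x*; u*]`.

A complex Jordan chain `Ãh = 0`, `Ãĥ = h ≠ 0` yields a real one `Ãv = 0`, `Ãg = v ≠ 0`
(real or imaginary parts). Testing the Riccati equation on `v` gives `ÃᵀPv = 0`, so
`vᵀPv = gᵀÃᵀPv = 0` and `Pv = 0`; the quadratic identity at `g` then forces `B̄ᵀPg = 0`,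
i.e. `Āg = v`. The bottom block row of `Ā` vanishes, so the input part of `v` is zero, and its
state part lies in `ker Q(α) ∩ ker (−L + aI)`, which observability makes trivial.
-/

theorem mulVec_dotProduct {m n α : Type*} [Fintype m] [Fintype n] [CommSemiring α]
    (A : Matrix m n α) (x : n → α) (y : m → α) : A *ᵥ x ⬝ᵥ y = x ⬝ᵥ Aᵀ *ᵥ y := by
  rw [dotProduct_comm, dotProduct_transpose_mulVec]

section Riccati

variable {k l : Type*} [Fintype k] [Fintype l] {A P Q : Matrix k k ℝ} {B : Matrix k l ℝ}

theorem closedLoop_mulVec (v : k → ℝ) :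
    (A - B * Bᵀ * P) *ᵥ v = A *ᵥ v - B *ᵥ Bᵀ *ᵥ P *ᵥ v := by
  rw [sub_mulVec, ← mulVec_mulVec, ← mulVec_mulVec]

theorem riccati_quadratic_identity (hPsymm : P.IsSymm)
    (hare : Aᵀ * P + P * A - P * B * Bᵀ * P + Q = 0) (v : k → ℝ) :
    2 * ((A - B * Bᵀ * P) *ᵥ v ⬝ᵥ P *ᵥ v) + Bᵀ *ᵥ P *ᵥ v ⬝ᵥ Bᵀ *ᵥ P *ᵥ v
      + v ⬝ᵥ Q *ᵥ v = 0 := by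
  have hP : ∀ w, v ⬝ᵥ P *ᵥ w = P *ᵥ v ⬝ᵥ w := fun w => by rw [mulVec_dotProduct, hPsymm.eq]
  have h := congrArg (fun M => v ⬝ᵥ M *ᵥ v) hare
  simp only [add_mulVec, sub_mulVec, ← mulVec_mulVec, dotProduct_add, dotProduct_sub,
    zero_mulVec, dotProduct_zero, hP, ← mulVec_dotProduct] at h
  rw [dotProduct_comm (P *ᵥ v) (B *ᵥ _), mulVec_dotProduct B] at h
  rw [closedLoop_mulVec, sub_dotProduct, mulVec_dotProduct B]
  linarith [dotProduct_comm (P *ᵥ v) (A *ᵥ v)]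

theorem riccati_gain_eq_zero_and_mulVec_eq_zero (hPsymm : P.IsSymm) (hQ : Q.PosSemidef)
    (hare : Aᵀ * P + P * A - P * B * Bᵀ * P + Q = 0) {v : k → ℝ}
    (hv : (A - B * Bᵀ * P) *ᵥ v ⬝ᵥ P *ᵥ v = 0) :
    Bᵀ *ᵥ P *ᵥ v = 0 ∧ Q *ᵥ v = 0 := by
  have key := riccati_quadratic_identity hPsymm hare v
  have hQv := hQ.dotProduct_mulVec_nonneg v
  have hgain := dotProduct_star_self_nonneg (Bᵀ *ᵥ P *ᵥ v)
  rw [star_trivial] at hQv hgain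
  rw [hv, mul_zero, zero_add] at key
  refine ⟨dotProduct_self_eq_zero.mp (by linarith), (hQ.dotProduct_mulVec_zero_iff v).mp ?_⟩
  rw [star_trivial]
  linarith

theorem closedLoop_mulVec_eq_zero_iff (hPsymm : P.IsSymm) (hQ : Q.PosSemidef)
    (hare : Aᵀ * P + P * A - P * B * Bᵀ * P + Q = 0) {v : k → ℝ} :
    (A - B * Bᵀ * P) *ᵥ v = 0 ↔ A *ᵥ v = 0 ∧ Q *ᵥ v = 0 := by
  constructor
  · intro hv
    obtain ⟨hgain, hQv⟩ :=
      riccati_gain_eq_zero_and_mulVec_eq_zero hPsymm hQ hare (by rw [hv, zero_dotProduct])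
    rw [closedLoop_mulVec, hgain, mulVec_zero, sub_zero] at hv
    exact ⟨hv, hQv⟩
  · rintro ⟨hAv, hQv⟩
    have key := riccati_quadratic_identity hPsymm hare v
    rw [closedLoop_mulVec, hAv, hQv, zero_sub, neg_dotProduct, mulVec_dotProduct B,
      dotProduct_zero] at key
    have hgain : Bᵀ *ᵥ P *ᵥ v = 0 := dotProduct_self_eq_zero.mp (by linarith)
    rw [closedLoop_mulVec, hAv, hgain, mulVec_zero, sub_zero]

theorem mulVec_eq_of_closedLoop_mulVec_eq (hP : P.PosSemidef) (hQ : Q.PosSemidef)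
    (hare : Aᵀ * P + P * A - P * B * Bᵀ * P + Q = 0) {v g : k → ℝ}
    (hv : (A - B * Bᵀ * P) *ᵥ v = 0) (hg : (A - B * Bᵀ * P) *ᵥ g = v) :
    A *ᵥ g = v := by
  have hPsymm : P.IsSymm := isHermitian_iff_isSymm.mp hP.isHermitian
  obtain ⟨hAv, -⟩ := (closedLoop_mulVec_eq_zero_iff hPsymm hQ hare).mp hv
  obtain ⟨hgain_v, hQv⟩ :=
    riccati_gain_eq_zero_and_mulVec_eq_zero hPsymm hQ hare (by rw [hv, zero_dotProduct])
  have hAtPv : Aᵀ *ᵥ P *ᵥ v = 0 := by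
    have h := congrArg (· *ᵥ v) hare
    simp only [add_mulVec, sub_mulVec, ← mulVec_mulVec, hAv, hgain_v, hQv, mulVec_zero,
      zero_mulVec, add_zero, sub_zero] at h
    exact h
  have hPv : P *ᵥ v = 0 := by
    refine (hP.dotProduct_mulVec_zero_iff v).mp ?_
    calc star v ⬝ᵥ P *ᵥ v = (A - B * Bᵀ * P) *ᵥ g ⬝ᵥ P *ᵥ v := by rw [star_trivial, hg]
      _ = g ⬝ᵥ Aᵀ *ᵥ P *ᵥ v - Bᵀ *ᵥ P *ᵥ g ⬝ᵥ Bᵀ *ᵥ P *ᵥ v := by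
        rw [closedLoop_mulVec, sub_dotProduct, mulVec_dotProduct, mulVec_dotProduct B]
      _ = 0 := by rw [hAtPv, hgain_v, dotProduct_zero, dotProduct_zero, sub_zero]
  obtain ⟨hgain_g, -⟩ := riccati_gain_eq_zero_and_mulVec_eq_zero hPsymm hQ hare (by
    rw [hg, dotProduct_comm, mulVec_dotProduct, hPsymm.eq, hPv, dotProduct_zero])
  rw [← hg, closedLoop_mulVec, hgain_g, mulVec_zero, sub_zero]

end Riccati

theorem re_map_ofReal_mulVec {m n : Type*} [Fintype n] (M : Matrix m n ℝ) (w : n → ℂ) :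
    (fun i => ((M.map Complex.ofReal *ᵥ w) i).re) = M *ᵥ fun j => (w j).re := by
  funext i
  simp [mulVec, dotProduct, Complex.re_sum]

theorem im_map_ofReal_mulVec {m n : Type*} [Fintype n] (M : Matrix m n ℝ) (w : n → ℂ) :
    (fun i => ((M.map Complex.ofReal *ᵥ w) i).im) = M *ᵥ fun j => (w j).im := by
  funext i
  simp [mulVec, dotProduct, Complex.im_sum]

theorem exists_real_chain_of_complex_chain {k : Type*} [Fintype k] (M : Matrix k k ℝ)
    {h ĥ : k → ℂ} (hne : h ≠ 0) (h0 : M.map Complex.ofReal *ᵥ h = 0)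
    (h1 : M.map Complex.ofReal *ᵥ ĥ = h) :
    ∃ v g : k → ℝ, v ≠ 0 ∧ M *ᵥ v = 0 ∧ M *ᵥ g = v := by
  by_cases hre : (fun i => (h i).re) = 0
  · refine ⟨fun i => (h i).im, fun i => (ĥ i).im, fun him => hne ?_, ?_, ?_⟩
    · funext i
      exact Complex.ext (congrFun hre i) (congrFun him i)
    · rw [← im_map_ofReal_mulVec, h0]; rfl
    · rw [← im_map_ofReal_mulVec, h1]
  · refine ⟨fun i => (h i).re, fun i => (ĥ i).re, hre, ?_, ?_⟩
    · rw [← re_map_ofReal_mulVec, h0]; rfl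
    · rw [← re_map_ofReal_mulVec, h1]

theorem Matrix.linearIndependent_row_of_rank_eq_card {m n R : Type*} [Field R] [Fintype m]
    [Fintype n] {A : Matrix m n R} (h : A.rank = Fintype.card m) :
    LinearIndependent R A.row := by
  rw [linearIndependent_iff_card_eq_finrank_span, Set.finrank, ← rank_eq_finrank_span_row, h]

section Observable

variable {K L : Type*} [Fintype K] [Fintype L] [DecidableEq K] [DecidableEq L]
  {M : Matrix K K ℝ} {C : Matrix L K ℝ}

theorem Observable.eq_zero_of_forall_mulVec_pow (hobs : Observable M C) {x : K → ℝ}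
    (hx : ∀ j : ℕ, C *ᵥ M ^ j *ᵥ x = 0) : x = 0 := by
  have hcol : ∀ j : ℕ, x ᵥ* (Mᵀ ^ j * Cᵀ) = 0 := fun j => by
    rw [← transpose_pow, ← transpose_mul, vecMul_transpose, ← mulVec_mulVec, hx]
  have hrows := linearIndependent_row_of_rank_eq_card hobs
  funext i
  refine Fintype.linearIndependent_iff.mp hrows x ?_ i
  funext p
  rw [Finset.sum_apply]
  exact congrFun (hcol p.1) p.2

theorem Observable.eq_zero_of_mulVec_eq_zero (hobs : Observable M C) {x : K → ℝ}
    (hC : C *ᵥ x = 0) (hM : M *ᵥ x = 0) : x = 0 := by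
  refine hobs.eq_zero_of_forall_mulVec_pow fun j => ?_
  cases j with
  | zero => rwa [pow_zero, one_mulVec]
  | succ j => rw [pow_succ, ← mulVec_mulVec, hM, mulVec_zero, mulVec_zero]

end Observable

section Qmat

variable {n : ℕ} (G : SimpleGraph (Fin n)) [DecidableRel G.Adj] {α : Fin n → ℝ}

theorem Qmat_eq_diagonal_mul_lapMatrix_mul_diagonal (hα : ∀ i, α i = 1 ∨ α i = -1) :
    Qmat G α = diagonal α * G.lapMatrix ℝ * diagonal α := by
  ext i j
  rw [mul_diagonal, diagonal_mul]
  simp only [Qmat, SimpleGraph.lapMatrix, SimpleGraph.degMatrix, Matrix.sub_apply,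
    Matrix.add_apply, of_apply, SimpleGraph.adjMatrix_apply]
  rcases hα i with hi | hi <;> rcases hα j with hj | hj <;> by_cases hij : i = j <;>
    simp [hi, hj, hij] <;> norm_num <;> split_ifs <;> norm_num

theorem posSemidef_Qmat (hα : ∀ i, α i = 1 ∨ α i = -1) : (Qmat G α).PosSemidef := by
  rw [Qmat_eq_diagonal_mul_lapMatrix_mul_diagonal G hα]
  simpa [diagonal_conjTranspose] using
    (SimpleGraph.posSemidef_lapMatrix ℝ G).conjTranspose_mul_mul_same (diagonal α)

theorem exists_eq_smul_of_Qmat_mulVec_eq_zero (hG : G.Connected) (hα : ∀ i, α i = 1 ∨ α i = -1)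
    {x : Fin n → ℝ} (hx : Qmat G α *ᵥ x = 0) : ∃ c : ℝ, x = c • α := by
  have hαα : diagonal α * diagonal α = 1 := by
    rw [diagonal_mul_diagonal, ← diagonal_one]
    congr 1
    funext i
    rcases hα i with h | h <;> simp [h]
  have hL : G.lapMatrix ℝ *ᵥ (diagonal α *ᵥ x) = 0 := by
    have := congrArg (diagonal α *ᵥ ·) hx
    simpa [Qmat_eq_diagonal_mul_lapMatrix_mul_diagonal G hα, mulVec_mulVec, ← mul_assoc,
      hαα] using this
  obtain ⟨i₀⟩ := hG.nonempty
  refine ⟨(diagonal α *ᵥ x) i₀, ?_⟩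
  have hconst := (SimpleGraph.lapMatrix_mulVec_eq_zero_iff_forall_reachable G).mp hL
  calc x = diagonal α *ᵥ (diagonal α *ᵥ x) := by rw [mulVec_mulVec, hαα, one_mulVec]
    _ = (diagonal α *ᵥ x) i₀ • α := by
      funext i
      rw [mulVec_diagonal, hconst i i₀ (hG.preconnected i i₀), Pi.smul_apply, smul_eq_mul,
        mul_comm]

theorem exists_eq_smul_of_Qmat_mulVec_eq_zero_of_ne_zero (hG : G.Connected)
    (hα : ∀ i, α i = 1 ∨ α i = -1) {x y : Fin n → ℝ} (hx : Qmat G α *ᵥ x = 0)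
    (hy : Qmat G α *ᵥ y = 0) (hy0 : y ≠ 0) : ∃ t : ℝ, x = t • y := by
  obtain ⟨c, rfl⟩ := exists_eq_smul_of_Qmat_mulVec_eq_zero G hG hα hx
  obtain ⟨d, rfl⟩ := exists_eq_smul_of_Qmat_mulVec_eq_zero G hG hα hy
  have hd : d ≠ 0 := by rintro rfl; exact hy0 (zero_smul ℝ α)
  exact ⟨c / d, by rw [smul_smul, div_mul_cancel₀ c hd]⟩

end Qmat

theorem eq_zero_of_ite_mulVec_eq_zero {n m R : Type*} [Fintype m] [DecidableEq n] [Semiring R]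
    {ι : m → n} (hι : ι.Injective) {u : m → R}
    (hu : (of fun i j => if i = ι j then (1 : R) else 0) *ᵥ u = 0) : u = 0 := by
  classical
  funext j
  simpa [mulVec, dotProduct, hι.eq_iff] using congrFun hu (ι j)

theorem Matrix.PosSemidef.fromBlocks_zero {n m R : Type*} [Fintype n] [Fintype m]
    [DecidableEq n] [Ring R] [PartialOrder R] [StarRing R] {Q : Matrix n n R}
    (hQ : Q.PosSemidef) : (fromBlocks Q 0 0 (0 : Matrix m m R)).PosSemidef := by
  have hE : fromBlocks Q 0 0 (0 : Matrix m m R)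
      = fromRows (1 : Matrix n n R) (0 : Matrix m n R) * Q
        * (fromRows (1 : Matrix n n R) (0 : Matrix m n R))ᴴ := by
    ext (i | i) (j | j) <;> simp [mul_apply, one_apply, apply_ite star]
  rw [hE]
  exact hQ.mul_mul_conjTranspose_same _

section Augmented

variable {n m : Type*} [Fintype n] [Fintype m] {M Q : Matrix n n ℝ} {B : Matrix n m ℝ}

theorem fromBlocks_mulVec_sumElim (M : Matrix n n ℝ) (B : Matrix n m ℝ) (x : n → ℝ)
    (u : m → ℝ) :
    fromBlocks M B (0 : Matrix m n ℝ) (0 : Matrix m m ℝ) *ᵥ Sum.elim x u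
      = Sum.elim (M *ᵥ x + B *ᵥ u) 0 := by
  rw [fromBlocks_mulVec, Sum.elim_comp_inl, Sum.elim_comp_inr, zero_mulVec, zero_mulVec,
    add_zero]

theorem augmented_kernel_iff_exists_eq_smul {xs : n → ℝ} {us : m → ℝ}
    (hB : ∀ u, B *ᵥ u = 0 → u = 0) (hQ : ∀ x, Q *ᵥ x = 0 → ∃ t : ℝ, x = t • xs)
    (hQxs : Q *ᵥ xs = 0) (hxs : M *ᵥ xs + B *ᵥ us = 0) (h : n ⊕ m → ℝ) :
    fromBlocks M B (0 : Matrix m n ℝ) (0 : Matrix m m ℝ) *ᵥ h = 0 ∧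
        fromBlocks Q 0 (0 : Matrix m n ℝ) (0 : Matrix m m ℝ) *ᵥ h = 0 ↔
      ∃ c : ℝ, h = c • Sum.elim xs us := by
  obtain ⟨x, u, rfl⟩ : ∃ x u, h = Sum.elim x u := ⟨_, _, (Sum.elim_comp_inl_inr h).symm⟩
  have hsmul (c : ℝ) : c • Sum.elim xs us = Sum.elim (c • xs) (c • us) :=
    Sum.comp_elim (c • ·) xs us
  simp only [fromBlocks_mulVec_sumElim, zero_mulVec, add_zero, ← Sum.elim_zero_zero,
    Sum.elim_eq_iff, and_true, hsmul]
  constructor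
  · rintro ⟨hx, hQx⟩
    obtain ⟨t, rfl⟩ := hQ x hQx
    refine ⟨t, rfl, sub_eq_zero.mp (hB _ ?_)⟩
    rw [mulVec_sub, mulVec_smul]
    rw [mulVec_smul] at hx
    linear_combination (norm := module) hx - t • hxs
  · rintro ⟨c, rfl, rfl⟩
    simp only [mulVec_smul, ← smul_add, hxs, hQxs, smul_zero, and_self]

theorem eq_zero_of_augmented_chain [DecidableEq n] (hobs : Observable M Q) {v g : n ⊕ m → ℝ}
    (hv : fromBlocks M B (0 : Matrix m n ℝ) (0 : Matrix m m ℝ) *ᵥ v = 0)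
    (hQv : fromBlocks Q 0 (0 : Matrix m n ℝ) (0 : Matrix m m ℝ) *ᵥ v = 0)
    (hg : fromBlocks M B (0 : Matrix m n ℝ) (0 : Matrix m m ℝ) *ᵥ g = v) : v = 0 := by
  obtain ⟨x, u, rfl⟩ : ∃ x u, v = Sum.elim x u := ⟨_, _, (Sum.elim_comp_inl_inr v).symm⟩
  rw [← Sum.elim_comp_inl_inr g, fromBlocks_mulVec_sumElim, Sum.elim_eq_iff] at hg
  rw [← hg.2] at hv hQv ⊢
  simp only [fromBlocks_mulVec_sumElim, mulVec_zero, add_zero, ← Sum.elim_zero_zero,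
    Sum.elim_eq_iff, and_true] at hv hQv ⊢
  exact hobs.eq_zero_of_mulVec_eq_zero hQv hv

end Augmented

theorem closedLoop_simple_zero_eigenvalue_general {n m : ℕ} (hn : 0 < n)
    (G : SimpleGraph (Fin n)) [DecidableRel G.Adj]
    (α : Fin n → ℝ) (hα : ∀ i, α i = 1 ∨ α i = -1)
    (p₀ : ℝ) (hp₀ : 0 < p₀) (a : ℝ)
    (ι : Fin m → Fin n) (hι : StrictMono ι)
    (B : Matrix (Fin n) (Fin m) ℝ) (hB : B = Matrix.of fun i j => if i = ι j then 1 else 0)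
    -- Assumption A1
    (hA1 : G.Connected)
    -- Assumption A2 with the witnesses `x* ∈ S(α)` and `u*` given explicitly
    (xs : Fin n → ℝ) (us : Fin m → ℝ)
    (hxs : Qmat G α *ᵥ xs = 0 ∧ p₀ * Real.sqrt n ≤ Real.sqrt (∑ i, xs i ^ 2))
    (hA2 : (-(G.lapMatrix ℝ) + a • (1 : Matrix (Fin n) (Fin n) ℝ)) *ᵥ xs + B *ᵥ us = 0)
    -- Assumption A3
    (hA3o : Observable (-(G.lapMatrix ℝ) + a • (1 : Matrix (Fin n) (Fin n) ℝ)) (Qmat G α))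
    (Abar : Matrix (Fin n ⊕ Fin m) (Fin n ⊕ Fin m) ℝ)
    (hAbar : Abar = Matrix.fromBlocks
      (-(G.lapMatrix ℝ) + a • (1 : Matrix (Fin n) (Fin n) ℝ)) B 0 0)
    (Bbar : Matrix (Fin n ⊕ Fin m) (Fin m) ℝ)
    (Qbar : Matrix (Fin n ⊕ Fin m) (Fin n ⊕ Fin m) ℝ)
    (hQbar : Qbar = Matrix.fromBlocks (Qmat G α) 0 0 0)
    (P : Matrix (Fin n ⊕ Fin m) (Fin n ⊕ Fin m) ℝ) (hP : P.PosSemidef)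
    (hare : Abarᵀ * P + P * Abar - P * Bbar * Bbarᵀ * P + Qbar = 0)
    (Atil : Matrix (Fin n ⊕ Fin m) (Fin n ⊕ Fin m) ℝ)
    (hAtil : Atil = Abar - Bbar * Bbarᵀ * P) :
    (∀ h : Fin n ⊕ Fin m → ℝ, Atil *ᵥ h = 0 ↔ ∃ c : ℝ, h = c • Sum.elim xs us) ∧
    ¬ ∃ (h hhat : Fin n ⊕ Fin m → ℂ), h ≠ 0 ∧
        Atil.map (Complex.ofReal) *ᵥ h = 0 ∧ Atil.map (Complex.ofReal) *ᵥ hhat = h := by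
  subst hB hAbar hQbar hAtil
  have hQbar_psd := (posSemidef_Qmat G hα).fromBlocks_zero (m := Fin m)
  have hker (v : Fin n ⊕ Fin m → ℝ) :=
    closedLoop_mulVec_eq_zero_iff (v := v) (isHermitian_iff_isSymm.mp hP.isHermitian)
      hQbar_psd hare
  have hxs0 : xs ≠ 0 := by
    rintro rfl
    have hpos : 0 < p₀ * Real.sqrt n := by positivity
    have hzero : Real.sqrt (∑ i, (0 : Fin n → ℝ) i ^ 2) = 0 := by simp
    linarith [hxs.2]
  refine ⟨fun h => (hker h).trans (augmented_kernel_iff_exists_eq_smul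
    (fun u hu => eq_zero_of_ite_mulVec_eq_zero hι.injective hu)
    (fun x hx => exists_eq_smul_of_Qmat_mulVec_eq_zero_of_ne_zero G hA1 hα hx hxs.1 hxs0)
    hxs.1 hA2 h), ?_⟩
  rintro ⟨h, ĥ, hne, h0, h1⟩
  obtain ⟨v, g, hv0, hv, hg⟩ := exists_real_chain_of_complex_chain _ hne h0 h1
  obtain ⟨hAv, hQv⟩ := (hker v).mp hv
  exact hv0 (eq_zero_of_augmented_chain hA3o hAv hQv
    (mulVec_eq_of_closedLoop_mulVec_eq hP hQbar_psd hare hv hg))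

/-- Under Assumptions A1–A3, for a symmetric PSD solution `P` of the ARE and
`Ã = Ā − B̄B̄ᵀP`: the kernel of `Ã` is the one-dimensional subspace spanned by
`ψ₁ = [x*; u*]`, and `0` is an algebraically simple eigenvalue of `Ã`: there is no
`ĥ ∈ ℂ^{n+m}` with `Ãĥ = h` for a nonzero `h` with `Ãh = 0`. -/
theorem closedLoop_simple_zero_eigenvalue {n m : ℕ} (hn : 0 < n)
    (G : SimpleGraph (Fin n)) [DecidableRel G.Adj]
    (α : Fin n → ℝ) (hα : ∀ i, α i = 1 ∨ α i = -1)
    (p₀ : ℝ) (hp₀ : 0 < p₀) (a : ℝ)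
    (ι : Fin m → Fin n) (hι : StrictMono ι)
    (B : Matrix (Fin n) (Fin m) ℝ) (hB : B = Matrix.of fun i j => if i = ι j then 1 else 0)
    -- Assumption A1
    (hA1 : G.Connected)
    -- Assumption A2 with the witnesses `x* ∈ S(α)` and `u*` given explicitly
    (xs : Fin n → ℝ) (us : Fin m → ℝ)
    (hxs : Qmat G α *ᵥ xs = 0 ∧ p₀ * Real.sqrt n ≤ Real.sqrt (∑ i, xs i ^ 2))
    (hA2 : (-(G.lapMatrix ℝ) + a • (1 : Matrix (Fin n) (Fin n) ℝ)) *ᵥ xs + B *ᵥ us = 0)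
    -- Assumption A3
    (hA3c : Controllable (-(G.lapMatrix ℝ) + a • (1 : Matrix (Fin n) (Fin n) ℝ)) B)
    (hA3o : Observable (-(G.lapMatrix ℝ) + a • (1 : Matrix (Fin n) (Fin n) ℝ)) (Qmat G α))
    (Abar : Matrix (Fin n ⊕ Fin m) (Fin n ⊕ Fin m) ℝ)
    (hAbar : Abar = Matrix.fromBlocks
      (-(G.lapMatrix ℝ) + a • (1 : Matrix (Fin n) (Fin n) ℝ)) B 0 0)
    (Bbar : Matrix (Fin n ⊕ Fin m) (Fin m) ℝ)
    (hBbar : Bbar = Matrix.fromRows (0 : Matrix (Fin n) (Fin m) ℝ) (1 : Matrix (Fin m) (Fin m) ℝ))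
    (Qbar : Matrix (Fin n ⊕ Fin m) (Fin n ⊕ Fin m) ℝ)
    (hQbar : Qbar = Matrix.fromBlocks (Qmat G α) 0 0 0)
    (P : Matrix (Fin n ⊕ Fin m) (Fin n ⊕ Fin m) ℝ) (hP : P.PosSemidef)
    (hare : Abarᵀ * P + P * Abar - P * Bbar * Bbarᵀ * P + Qbar = 0)
    (Atil : Matrix (Fin n ⊕ Fin m) (Fin n ⊕ Fin m) ℝ)
    (hAtil : Atil = Abar - Bbar * Bbarᵀ * P) :
    (∀ h : Fin n ⊕ Fin m → ℝ, Atil *ᵥ h = 0 ↔ ∃ c : ℝ, h = c • Sum.elim xs us) ∧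
    ¬ ∃ (h hhat : Fin n ⊕ Fin m → ℂ), h ≠ 0 ∧
        Atil.map (Complex.ofReal) *ᵥ h = 0 ∧ Atil.map (Complex.ofReal) *ᵥ hhat = h :=
  closedLoop_simple_zero_eigenvalue_general hn G α hα p₀ hp₀ a ι hι B hB hA1 xs us hxs hA2 hA3o Abar
    hAbar Bbar Qbar hQbar P hP hare Atil hAtil
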